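/- Let (K₀, K₁) be a pair with K₁ an infinite compact, totally disconnected metrizable space and K₀ ⊆ K₁ closed and containing all isolated points of K₁. Then there exists a sequence (ξ_i)_{i∈ℕ} of finite partitions of K₁ by clopen sets such that: ξ₀ = {K₁}; ξ₁ has 2 or 4 elements; each ξ_{i+1} refines ξ_i; for i ≥ 1, every A ∈ ξ_i not in ξ_{i+1} is the disjoint union of exactly three distinct nonempty elements of ξ_{i+1}; for i ≥ 1 and A ∈ ξ_i, A ∩ K₀ ≠ ∅ if and only if A ∈ ξ_{i−1} ∪ ξ_{i+1}; and the sequence separates points of K₁. -/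

import Mathlib

/-!
Call a clopen set *admissible* if it is infinite or has an odd number of points. An admissible
set that is not a point can be cut into three admissible clopen pieces, each lying on one side of
any prescribed clopen set `U`: cut along `U` (or along a clopen set separating two of its points),
keep the admissible half, and halve the other one, which then has even size or is infinite, into
two admissible pieces, moving a single isolated point across when needed. Parity is what makes
this work: a finite odd set splits into an odd and an even part.

Starting from a two-piece partition of `K₁`, each step keeps the pieces that meet `K₀` and have
just been created, and the points; every other piece is cut into three. The clopen sets `U`
run through an enumeration of all clopen sets, each used for two consecutive steps, so that
after those two steps every piece lies on one side of it; this separates points.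
-/

/-- A finite partition of a topological space by clopen sets. -/
def IsFiniteClopenPartition {K : Type*} [TopologicalSpace K] (ξ : Set (Set K)) : Prop :=
  ξ.Finite ∧ (∀ A ∈ ξ, IsClopen A ∧ A.Nonempty) ∧ ξ.PairwiseDisjoint id ∧ ⋃₀ ξ = Set.univ

/-- `η` refines `ξ`. -/
def PartRefines {K : Type*} (ξ η : Set (Set K)) : Prop :=
  ∀ A ∈ η, ∃ B ∈ ξ, A ⊆ B

open Set

section

variable {K : Type*}

def SplitsInThree (P : Set (Set K)) (A : Set K) : Prop :=
  ∃ B₁ ∈ P, ∃ B₂ ∈ P, ∃ B₃ ∈ P,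
    B₁ ≠ B₂ ∧ B₁ ≠ B₃ ∧ B₂ ≠ B₃ ∧
    B₁.Nonempty ∧ B₂.Nonempty ∧ B₃.Nonempty ∧
    Disjoint B₁ B₂ ∧ Disjoint B₁ B₃ ∧ Disjoint B₂ B₃ ∧
    A = B₁ ∪ B₂ ∪ B₃

theorem SplitsInThree.mono {P Q : Set (Set K)} {A : Set K} (h : SplitsInThree P A)
    (hPQ : P ⊆ Q) : SplitsInThree Q A := by
  obtain ⟨B₁, h₁, B₂, h₂, B₃, h₃, h⟩ := h
  exact ⟨B₁, hPQ h₁, B₂, hPQ h₂, B₃, hPQ h₃, h⟩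

theorem infinite_or_odd_and_even_or_of_disjoint {H₁ H₂ : Set K}
    (h : (H₁ ∪ H₂).Infinite ∨ Odd (H₁ ∪ H₂).ncard) (hd : Disjoint H₁ H₂) :
    ((H₁.Infinite ∨ Odd H₁.ncard) ∧ Even H₂.ncard) ∨
      (Even H₁.ncard ∧ (H₂.Infinite ∨ Odd H₂.ncard)) := by
  rcases H₁.finite_or_infinite with h₁ | h₁
  · rcases H₂.finite_or_infinite with h₂ | h₂
    · have hodd : Odd (H₁.ncard + H₂.ncard) := by
        rw [← ncard_union_eq hd h₁ h₂]
        exact h.resolve_left (h₁.union h₂).not_infinite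
      rcases Nat.even_or_odd H₁.ncard with e | o
      · exact Or.inr ⟨e, Or.inr ((Nat.odd_add'.mp hodd).mpr e)⟩
      · exact Or.inl ⟨Or.inr o, (Nat.odd_add.mp hodd).mp o⟩
    · rcases Nat.even_or_odd H₁.ncard with e | o
      · exact Or.inr ⟨e, Or.inl h₂⟩
      · exact Or.inl ⟨Or.inr o, h₂.ncard ▸ Even.zero⟩
  · rcases Nat.even_or_odd H₂.ncard with e | o
    · exact Or.inl ⟨Or.inl h₁, e⟩
    · exact Or.inr ⟨h₁.ncard ▸ Even.zero, Or.inr o⟩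

section Admissible

variable [TopologicalSpace K]

theorem IsOpen.isClopen_of_subset_of_finite [T1Space K] {F S : Set K} (hF : IsOpen F)
    (hfin : F.Finite) (hS : S ⊆ F) : IsClopen S :=
  ⟨(hfin.subset hS).isClosed, sdiff_sdiff_cancel_left hS ▸ hF.sdiff hfin.sdiff.isClosed⟩

/-- Pieces with exactly two points could never be cut into three; the admissible sets avoid them
and are stable under the cutting below. -/
def IsAdmissible (A : Set K) : Prop :=
  IsClopen A ∧ (A.Infinite ∨ Odd A.ncard)

theorem IsAdmissible.nonempty {A : Set K} (h : IsAdmissible A) : A.Nonempty := by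
  rcases h.2 with h | h
  · exact h.nonempty
  · exact nonempty_of_ncard_ne_zero (by rintro h0; simp [h0] at h)

theorem isAdmissible_univ [Infinite K] : IsAdmissible (univ : Set K) :=
  ⟨isClopen_univ, Or.inl infinite_univ⟩

theorem isAdmissible_singleton [T1Space K] {F : Set K} (hF : IsOpen F) (hfin : F.Finite)
    {c : K} (hc : c ∈ F) : IsAdmissible ({c} : Set K) :=
  ⟨hF.isClopen_of_subset_of_finite hfin (singleton_subset_iff.2 hc), Or.inr (by simp)⟩

theorem isAdmissible_diff_singleton [T1Space K] {F : Set K} (hF : IsClopen F) (hfin : F.Finite)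
    (he : Even F.ncard) {c : K} (hc : c ∈ F) : IsAdmissible (F \ {c}) := by
  refine ⟨hF.diff (isAdmissible_singleton hF.isOpen hfin hc).1, Or.inr ?_⟩
  rw [ncard_sdiff_singleton_of_mem hc]
  exact Nat.Even.sub_odd ((ncard_pos hfin).2 ⟨c, hc⟩) he odd_one

structure IsAdmissiblePartition (S : Set K) (P : Set (Set K)) : Prop where
  finite : P.Finite
  admissible : ∀ A ∈ P, IsAdmissible A
  pairwiseDisjoint : P.PairwiseDisjoint id
  sUnion_eq : ⋃₀ P = S

namespace IsAdmissiblePartition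

variable {S S₁ S₂ A B : Set K} {P P₁ P₂ : Set (Set K)}

theorem singleton (hA : IsAdmissible A) : IsAdmissiblePartition A {A} :=
  ⟨finite_singleton A, by simpa using hA, pairwiseDisjoint_singleton _ _, sUnion_singleton A⟩

theorem subset (h : IsAdmissiblePartition S P) (hB : B ∈ P) : B ⊆ S :=
  h.sUnion_eq ▸ subset_sUnion_of_mem hB

theorem eq_of_subset (h : IsAdmissiblePartition S P) (hA : A ∈ P) (hB : B ∈ P) (hAB : A ⊆ B) :
    A = B := by
  by_contra hne
  obtain ⟨x, hx⟩ := (h.admissible A hA).nonempty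
  exact disjoint_left.mp (h.pairwiseDisjoint hA hB hne) hx (hAB hx)

theorem eq_singleton_of_mem (h : IsAdmissiblePartition S P) (hS : S ∈ P) : P = {S} :=
  eq_singleton_iff_unique_mem.2 ⟨hS, fun _ hB => h.eq_of_subset hB hS (h.subset hB)⟩

theorem union (h₁ : IsAdmissiblePartition S₁ P₁) (h₂ : IsAdmissiblePartition S₂ P₂)
    (hd : Disjoint S₁ S₂) : IsAdmissiblePartition (S₁ ∪ S₂) (P₁ ∪ P₂) where
  finite := h₁.finite.union h₂.finite
  admissible := by
    rintro A (hA | hA)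
    exacts [h₁.admissible A hA, h₂.admissible A hA]
  pairwiseDisjoint := h₁.pairwiseDisjoint.union h₂.pairwiseDisjoint
    fun _ hA _ hB _ => hd.mono (h₁.subset hA) (h₂.subset hB)
  sUnion_eq := by rw [sUnion_union, h₁.sUnion_eq, h₂.sUnion_eq]

theorem ncard_union (h₁ : IsAdmissiblePartition S₁ P₁) (h₂ : IsAdmissiblePartition S₂ P₂)
    (hd : Disjoint S₁ S₂) : (P₁ ∪ P₂).ncard = P₁.ncard + P₂.ncard := by
  refine ncard_union_eq (disjoint_left.2 fun A hA₁ hA₂ => ?_) h₁.finite h₂.finite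
  obtain ⟨x, hx⟩ := (h₁.admissible A hA₁).nonempty
  exact disjoint_left.1 hd (h₁.subset hA₁ hx) (h₂.subset hA₂ hx)

theorem biUnion (hP : IsAdmissiblePartition S P) {s : Set K → Set (Set K)}
    (hs : ∀ A ∈ P, IsAdmissiblePartition A (s A)) : IsAdmissiblePartition S (⋃ A ∈ P, s A) where
  finite := hP.finite.biUnion fun A hA => (hs A hA).finite
  admissible := by
    simp only [mem_iUnion₂]
    rintro B ⟨A, hA, hB⟩
    exact (hs A hA).admissible B hB
  pairwiseDisjoint := by
    refine PairwiseDisjoint.biUnion ?_ fun A hA => (hs A hA).pairwiseDisjoint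
    intro A hA B hB hAB
    change Disjoint (⋃ i ∈ s A, i) (⋃ i ∈ s B, i)
    rw [← sUnion_eq_biUnion, ← sUnion_eq_biUnion, (hs A hA).sUnion_eq, (hs B hB).sUnion_eq]
    exact hP.pairwiseDisjoint hA hB hAB
  sUnion_eq := by
    rw [sUnion_iUnion, ← hP.sUnion_eq, sUnion_eq_biUnion]
    refine iUnion_congr fun A => ?_
    rw [sUnion_iUnion]
    exact iUnion_congr fun hA => (hs A hA).sUnion_eq

theorem mem_biUnion_iff (hP : IsAdmissiblePartition S P) {s : Set K → Set (Set K)}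
    (hs : ∀ A ∈ P, IsAdmissiblePartition A (s A)) (hA : A ∈ P) :
    A ∈ ⋃ B ∈ P, s B ↔ A ∈ s A := by
  simp only [mem_iUnion₂]
  refine ⟨?_, fun h => ⟨A, hA, h⟩⟩
  rintro ⟨B, hB, hAB⟩
  obtain rfl := hP.eq_of_subset hA hB ((hs B hB).subset hAB)
  exact hAB

theorem splitsInThree (h : IsAdmissiblePartition S P) (h3 : P.ncard = 3) : SplitsInThree P S := by
  obtain ⟨B₁, B₂, B₃, h₁₂, h₁₃, h₂₃, rfl⟩ := ncard_eq_three.mp h3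
  have hne : ∀ B ∈ ({B₁, B₂, B₃} : Set (Set K)), B.Nonempty := fun B hB =>
    (h.admissible B hB).nonempty
  have hd := h.pairwiseDisjoint
  refine ⟨B₁, by simp, B₂, by simp, B₃, by simp, h₁₂, h₁₃, h₂₃, hne _ (by simp),
    hne _ (by simp), hne _ (by simp), hd (by simp) (by simp) h₁₂, hd (by simp) (by simp) h₁₃,
    hd (by simp) (by simp) h₂₃, ?_⟩
  rw [← h.sUnion_eq]
  simp [union_assoc]

theorem isFiniteClopenPartition (h : IsAdmissiblePartition univ P) :
    IsFiniteClopenPartition P :=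
  ⟨h.finite, fun A hA => ⟨(h.admissible A hA).1, (h.admissible A hA).nonempty⟩,
    h.pairwiseDisjoint, h.sUnion_eq⟩

end IsAdmissiblePartition

theorem exists_pair_of_disjoint {A B : Set K} (hA : IsAdmissible A) (hB : IsAdmissible B)
    (hd : Disjoint A B) : ∃ P, IsAdmissiblePartition (A ∪ B) P ∧ P.ncard = 2 := by
  have hA' := IsAdmissiblePartition.singleton hA
  have hB' := IsAdmissiblePartition.singleton hB
  exact ⟨_, hA'.union hB' hd, by rw [hA'.ncard_union hB' hd, ncard_singleton, ncard_singleton]⟩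

theorem exists_pair_of_infinite_union [T1Space K] {I F : Set K} (hI : IsClopen I)
    (hIinf : I.Infinite) (hF : IsClopen F) (hFne : F.Nonempty) (hd : Disjoint I F) :
    ∃ P, IsAdmissiblePartition (I ∪ F) P ∧ P.ncard = 2 := by
  by_cases hFadm : F.Infinite ∨ Odd F.ncard
  · exact exists_pair_of_disjoint ⟨hI, Or.inl hIinf⟩ ⟨hF, hFadm⟩ hd
  obtain ⟨hfin, heven⟩ : F.Finite ∧ Even F.ncard := by
    simpa [not_infinite, Nat.not_odd_iff_even] using hFadm
  obtain ⟨c, hc⟩ := hFne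
  have hc' := isAdmissible_singleton hF.isOpen hfin hc
  have := exists_pair_of_disjoint (A := I ∪ {c})
    ⟨hI.union hc'.1, Or.inl (hIinf.mono subset_union_left)⟩
    (isAdmissible_diff_singleton hF hfin heven hc)
    (disjoint_union_left.2 ⟨hd.mono_right sdiff_subset, disjoint_sdiff_right⟩)
  rwa [union_assoc, union_sdiff_cancel (singleton_subset_iff.2 hc)] at this

end Admissible

section Splitting

variable [TopologicalSpace K] [TotallySeparatedSpace K]

/-- As `ncard` of an infinite set is `0`, this covers every infinite clopen `H`. -/
theorem exists_pair_of_even_ncard {H : Set K} (hH : IsClopen H) (hne : H.Nonempty)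
    (he : Even H.ncard) : ∃ P, IsAdmissiblePartition H P ∧ P.ncard = 2 := by
  rcases H.finite_or_infinite with hfin | hinf
  · obtain ⟨c, hc⟩ := hne
    have := exists_pair_of_disjoint (isAdmissible_singleton hH.isOpen hfin hc)
      (isAdmissible_diff_singleton hH hfin he hc) disjoint_sdiff_right
    rwa [union_sdiff_cancel (singleton_subset_iff.2 hc)] at this
  obtain ⟨x, hx, y, hy, hxy⟩ := hinf.nontrivial
  obtain ⟨V, hV, hxV, hyV⟩ := exists_isClopen_of_totally_separated hxy
  have hd : Disjoint (H ∩ V) (H \ V) := disjoint_sdiff_inter.symm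
  rw [← inter_union_sdiff H V] at hinf ⊢
  rcases infinite_union.1 hinf with h | h
  · exact exists_pair_of_infinite_union (hH.inter hV) h (hH.diff hV) ⟨y, hy, hyV⟩ hd
  · rw [union_comm]
    exact exists_pair_of_infinite_union (hH.diff hV) h (hH.inter hV) ⟨x, hx, hxV⟩ hd.symm

theorem exists_triple_of_isAdmissible_inter {A U : Set K} (hA : IsClopen A) (hU : IsClopen U)
    (hAU : IsAdmissible (A ∩ U)) (hne : (A \ U).Nonempty) (he : Even (A \ U).ncard) :
    ∃ P, IsAdmissiblePartition A P ∧ P.ncard = 3 ∧ ∀ B ∈ P, B ⊆ U ∨ Disjoint B U := by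
  obtain ⟨P, hP, hcard⟩ := exists_pair_of_even_ncard (hA.diff hU) hne he
  have h₁ := IsAdmissiblePartition.singleton hAU
  have hd : Disjoint (A ∩ U) (A \ U) := disjoint_sdiff_inter.symm
  have hunion := h₁.union hP hd
  rw [inter_union_sdiff] at hunion
  refine ⟨{A ∩ U} ∪ P, hunion, by rw [h₁.ncard_union hP hd, ncard_singleton, hcard], ?_⟩
  rintro B (rfl | hB)
  · exact Or.inl inter_subset_right
  · exact Or.inr (disjoint_sdiff_left.mono_left (hP.subset hB))

theorem exists_triple_of_straddles {A U : Set K} (hA : IsAdmissible A) (hU : IsClopen U)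
    (h₁ : (A ∩ U).Nonempty) (h₂ : (A \ U).Nonempty) :
    ∃ P, IsAdmissiblePartition A P ∧ P.ncard = 3 ∧ ∀ B ∈ P, B ⊆ U ∨ Disjoint B U := by
  rcases infinite_or_odd_and_even_or_of_disjoint ((inter_union_sdiff A U).symm ▸ hA.2)
    disjoint_sdiff_inter.symm with ⟨ho, he⟩ | ⟨he, ho⟩
  · exact exists_triple_of_isAdmissible_inter hA.1 hU ⟨hA.1.inter hU, ho⟩ h₂ he
  · rw [sdiff_eq] at ho h₂
    rw [← sdiff_compl] at he h₁
    obtain ⟨P, hP, hcard, hside⟩ :=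
      exists_triple_of_isAdmissible_inter hA.1 hU.compl ⟨hA.1.inter hU.compl, ho⟩ h₁ he
    exact ⟨P, hP, hcard, fun B hB => (hside B hB).symm.imp
      disjoint_compl_right_iff_subset.mp subset_compl_iff_disjoint_right.mp⟩

theorem exists_triple {A U : Set K} (hA : IsAdmissible A) (hA₁ : ¬∃ x, A = {x})
    (hU : IsClopen U) :
    ∃ P, IsAdmissiblePartition A P ∧ P.ncard = 3 ∧ ∀ B ∈ P, B ⊆ U ∨ Disjoint B U := by
  by_cases hs : (A ∩ U).Nonempty ∧ (A \ U).Nonempty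
  · exact exists_triple_of_straddles hA hU hs.1 hs.2
  have hside : A ⊆ U ∨ Disjoint A U := by
    rwa [not_and_or, not_nonempty_iff_eq_empty, not_nonempty_iff_eq_empty, sdiff_eq_empty,
      ← disjoint_iff_inter_eq_empty, or_comm] at hs
  obtain ⟨x, hx, y, hy, hxy⟩ := hA.nonempty.exists_eq_singleton_or_nontrivial.resolve_left hA₁
  obtain ⟨V, hV, hxV, hyV⟩ := exists_isClopen_of_totally_separated hxy
  obtain ⟨P, hP, hcard, -⟩ := exists_triple_of_straddles hA hV ⟨x, hx, hxV⟩ ⟨y, hy, hyV⟩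
  exact ⟨P, hP, hcard, fun B hB =>
    hside.imp (hP.subset hB).trans (Disjoint.mono_left (hP.subset hB))⟩

end Splitting

structure IsRefinementStep (R : Set K → Prop) (U : Set K) (P P' : Set (Set K)) : Prop where
  mem_iff : ∀ A ∈ P, A ∈ P' ↔ R A
  refines : PartRefines P P'
  splitsInThree : ∀ A ∈ P, A ∉ P' → SplitsInThree P' A
  subset_or_disjoint : ∀ B ∈ P', B ∉ P → B ⊆ U ∨ Disjoint B U

theorem exists_isRefinementStep [TopologicalSpace K] [TotallySeparatedSpace K] {S : Set K}
    {P : Set (Set K)} (hP : IsAdmissiblePartition S P) {R : Set K → Prop}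
    (hR : ∀ x, {x} ∈ P → R {x}) {U : Set K} (hU : IsClopen U) :
    ∃ P', IsAdmissiblePartition S P' ∧ IsRefinementStep R U P P' := by
  classical
  have hsplit : ∀ A ∈ P, ¬R A → ∃ T, IsAdmissiblePartition A T ∧ T.ncard = 3 ∧
      ∀ B ∈ T, B ⊆ U ∨ Disjoint B U := fun A hA hRA =>
    exists_triple (hP.admissible A hA) (by rintro ⟨x, rfl⟩; exact hRA (hR x hA)) hU
  choose! T hT hTcard hTside using hsplit
  let s : Set K → Set (Set K) := fun A => if R A then {A} else T A
  have hs : ∀ A ∈ P, IsAdmissiblePartition A (s A) := by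
    intro A hA
    by_cases hRA : R A
    · simpa [s, hRA] using IsAdmissiblePartition.singleton (hP.admissible A hA)
    · simpa [s, hRA] using hT A hA hRA
  have hmem : ∀ A ∈ P, A ∈ ⋃ B ∈ P, s B ↔ R A := by
    intro A hA
    rw [hP.mem_biUnion_iff hs hA]
    by_cases hRA : R A
    · simp [s, hRA]
    · simp only [s, hRA, if_false, iff_false]
      intro hAT
      have h1 := congrArg ncard ((hT A hA hRA).eq_singleton_of_mem hAT)
      rw [hTcard A hA hRA, ncard_singleton] at h1
      omega
  refine ⟨⋃ A ∈ P, s A, hP.biUnion hs, hmem, ?_, ?_, ?_⟩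
  · intro B hB
    obtain ⟨A, hA, hBA⟩ := mem_iUnion₂.1 hB
    exact ⟨A, hA, (hs A hA).subset hBA⟩
  · intro A hA hA'
    have hRA : ¬R A := fun h => hA' ((hmem A hA).2 h)
    refine ((hT A hA hRA).splitsInThree (hTcard A hA hRA)).mono fun B hB => ?_
    exact mem_biUnion hA (by simpa [s, hRA] using hB)
  · intro B hB hBP
    obtain ⟨A, hA, hBA⟩ := mem_iUnion₂.1 hB
    by_cases hRA : R A
    · simp only [s, hRA, if_true, mem_singleton_iff] at hBA
      exact absurd (hBA ▸ hA) hBP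
    · exact hTside A hA hRA B (by simpa [s, hRA] using hBA)


/-- With `Q = ξ i`, the rule deciding whether a piece of `ξ (i + 1)` is kept in `ξ (i + 2)`:
it must meet `K₀` and be new, unless it is a point, which cannot be cut. -/
def IsRetained (K₀ : Set K) (Q : Set (Set K)) (A : Set K) : Prop :=
  (A ∩ K₀).Nonempty ∧ (A ∈ Q → ∃ x, A = {x})

theorem isRetained_singleton {K₀ : Set K} (Q : Set (Set K)) {x : K} (hx : x ∈ K₀) :
    IsRetained K₀ Q {x} :=
  ⟨⟨x, rfl, hx⟩, fun _ => ⟨x, rfl⟩⟩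

section Sequence

variable {K₀ : Set K} {ξ : ℕ → Set (Set K)} {V : ℕ → Set K}

theorem inter_nonempty_iff_mem_of_isRefinementStep
    (hξ : ∀ n, IsRefinementStep (IsRetained K₀ (ξ n)) (V n) (ξ (n + 1)) (ξ (n + 2)))
    (h01 : ∀ A ∈ ξ 1, A ∉ ξ 0) {i : ℕ} (hi : 1 ≤ i) {A : Set K} (hA : A ∈ ξ i) :
    (A ∩ K₀).Nonempty ↔ A ∈ ξ (i - 1) ∪ ξ (i + 1) := by
  obtain ⟨n, rfl⟩ := Nat.exists_eq_add_of_le' hi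
  rw [Nat.add_sub_cancel, mem_union]
  constructor
  · intro hK
    by_contra! h
    exact h.2 (((hξ n).mem_iff A hA).2 ⟨hK, fun h' => absurd h' h.1⟩)
  · rintro (h | h)
    · cases n with
      | zero => exact absurd h (h01 A hA)
      | succ m => exact (((hξ m).mem_iff A h).1 hA).1
    · exact (((hξ n).mem_iff A hA).1 h).1

theorem subset_or_disjoint_of_isRefinementStep
    (hξ : ∀ n, IsRefinementStep (IsRetained K₀ (ξ n)) (V n) (ξ (n + 1)) (ξ (n + 2)))
    {n : ℕ} (hV : V (n + 1) = V n) {B : Set K} (hB : B ∈ ξ (n + 3)) :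
    B ⊆ V n ∨ Disjoint B (V n) := by
  by_cases h₂ : B ∈ ξ (n + 2)
  · obtain ⟨-, hpoint⟩ := ((hξ (n + 1)).mem_iff B h₂).1 hB
    by_cases h₁ : B ∈ ξ (n + 1)
    · obtain ⟨x, rfl⟩ := hpoint h₁
      exact (em (x ∈ V n)).imp singleton_subset_iff.2 disjoint_singleton_left.2
    · exact (hξ n).subset_or_disjoint B h₂ h₁
  · rw [← hV]
    exact (hξ (n + 1)).subset_or_disjoint B hB h₂

theorem separates_points_of_isRefinementStep {U : ℕ → Set K}
    (hξ : ∀ n, IsRefinementStep (IsRetained K₀ (ξ n)) (U (n / 2)) (ξ (n + 1)) (ξ (n + 2)))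
    (hU : ∀ x y : K, x ≠ y → ∃ n, x ∈ U n ∧ y ∉ U n) :
    ∀ x y : K, x ≠ y → ∃ i, ∀ A ∈ ξ i, x ∈ A → y ∉ A := by
  intro x y hxy
  obtain ⟨m, hxU, hyU⟩ := hU x y hxy
  refine ⟨2 * m + 3, fun A hA hxA hyA => ?_⟩
  have hside := subset_or_disjoint_of_isRefinementStep hξ (n := 2 * m) (congrArg U (by omega)) hA
  rw [show 2 * m / 2 = m by omega] at hside
  rcases hside with h | h
  · exact hyU (h hyA)
  · exact disjoint_left.1 h hxA hxU

end Sequence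

theorem exists_seq_of_step {α : Type*} {p : α → Prop} {r : ℕ → α → α → α → Prop} {a b : α}
    (ha : p a) (hb : p b) (h : ∀ n x y, p y → ∃ z, p z ∧ r n x y z) :
    ∃ ξ : ℕ → α, ξ 0 = a ∧ ξ 1 = b ∧ ∀ n, p (ξ n) ∧ r n (ξ n) (ξ (n + 1)) (ξ (n + 2)) := by
  classical
  have h' : ∀ n x y, ∃ z, p y → p z ∧ r n x y z := fun n x y =>
    if hy : p y then (h n x y hy).imp fun _ hz _ => hz else ⟨y, fun h => absurd h hy⟩
  choose f hf using h'
  let g : ℕ → α × α := fun n => Nat.rec (a, b) (fun n q => (q.2, f n q.1 q.2)) n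
  have hg : ∀ n, p (g n).1 ∧ p (g n).2 := by
    intro n
    induction n with
    | zero => exact ⟨ha, hb⟩
    | succ n ih => exact ⟨ih.2, (hf n _ _ ih.2).1⟩
  exact ⟨fun n => (g n).1, rfl, rfl, fun n => ⟨(hg n).1, (hf n _ _ (hg n).2).2⟩⟩

theorem exists_seq_isClopen_separating (K : Type*) [TopologicalSpace K] [CompactSpace K]
    [T2Space K] [TotallyDisconnectedSpace K] [SecondCountableTopology K] :
    ∃ U : ℕ → Set K, (∀ n, IsClopen (U n)) ∧ ∀ x y : K, x ≠ y → ∃ n, x ∈ U n ∧ y ∉ U n := by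
  have := TopologicalSpace.Clopens.countable_iff_secondCountable.2 ‹SecondCountableTopology K›
  obtain ⟨U, hU⟩ := exists_surjective_nat (TopologicalSpace.Clopens K)
  refine ⟨fun n => U n, fun n => (U n).isClopen, fun x y hxy => ?_⟩
  obtain ⟨V, hV, hxV, hyV⟩ := exists_isClopen_of_totally_separated hxy
  obtain ⟨n, hn⟩ := hU ⟨V, hV⟩
  exact ⟨n, by simpa [hn] using hxV, by simpa [hn] using hyV⟩

end

theorem stmt16_general (K₁ : Type*) [TopologicalSpace K₁] [CompactSpace K₁]
    [TopologicalSpace.MetrizableSpace K₁] [TotallyDisconnectedSpace K₁] [Infinite K₁]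
    (K₀ : Set K₁)
    (hiso : ∀ x : K₁, IsOpen ({x} : Set K₁) → x ∈ K₀) :
    ∃ ξ : ℕ → Set (Set K₁),
      (∀ i, IsFiniteClopenPartition (ξ i)) ∧
      ξ 0 = {Set.univ} ∧
      ((ξ 1).ncard = 2 ∨ (ξ 1).ncard = 4) ∧
      (∀ i, PartRefines (ξ i) (ξ (i + 1))) ∧
      (∀ i, 1 ≤ i → ∀ A ∈ ξ i, A ∉ ξ (i + 1) →
        ∃ B₁ ∈ ξ (i + 1), ∃ B₂ ∈ ξ (i + 1), ∃ B₃ ∈ ξ (i + 1),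
          B₁ ≠ B₂ ∧ B₁ ≠ B₃ ∧ B₂ ≠ B₃ ∧
          B₁.Nonempty ∧ B₂.Nonempty ∧ B₃.Nonempty ∧
          Disjoint B₁ B₂ ∧ Disjoint B₁ B₃ ∧ Disjoint B₂ B₃ ∧
          A = B₁ ∪ B₂ ∪ B₃) ∧
      (∀ i, 1 ≤ i → ∀ A ∈ ξ i,
        ((A ∩ K₀).Nonempty ↔ A ∈ ξ (i - 1) ∪ ξ (i + 1))) ∧
      (∀ x y : K₁, x ≠ y → ∃ i, ∀ A ∈ ξ i, x ∈ A → y ∉ A) := by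
  obtain ⟨U, hU, hUsep⟩ := exists_seq_isClopen_separating K₁
  obtain ⟨P₁, hP₁, hP₁card⟩ := exists_pair_of_even_ncard (K := K₁) isClopen_univ univ_nonempty
    (by rw [infinite_univ.ncard]; exact Even.zero)
  obtain ⟨ξ, hξ0, hξ1, hξ⟩ := exists_seq_of_step (IsAdmissiblePartition.singleton isAdmissible_univ)
    hP₁ (r := fun n Q P P' => IsRefinementStep (IsRetained K₀ Q) (U (n / 2)) P P')
    fun n Q P hP => exists_isRefinementStep hP
      (fun x hx => isRetained_singleton Q (hiso x (hP.admissible _ hx).1.isOpen)) (hU (n / 2))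
  have h01 : ∀ A ∈ ξ 1, A ∉ ξ 0 := by
    rintro A hA hA0
    rw [hξ0, mem_singleton_iff] at hA0
    rw [hξ1, hA0] at hA
    rw [hP₁.eq_singleton_of_mem hA, ncard_singleton] at hP₁card
    omega
  refine ⟨ξ, fun i => (hξ i).1.isFiniteClopenPartition, hξ0, Or.inl (hξ1 ▸ hP₁card), ?_, ?_,
    fun i hi A hA => inter_nonempty_iff_mem_of_isRefinementStep (fun n => (hξ n).2) h01 hi hA,
    separates_points_of_isRefinementStep (fun n => (hξ n).2) hUsep⟩
  · rintro (_ | n)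
    · exact fun A _ => ⟨univ, hξ0 ▸ mem_singleton _, subset_univ A⟩
    · exact (hξ n).2.refines
  · rintro (_ | n) hi
    · omega
    · exact (hξ n).2.splitsInThree

/-- Lemma `l.cantor`: for any pair `(K₀, K₁)` satisfying condition (*) with `K₁`
infinite, there exists a sequence of finite clopen partitions of `K₁` adapted to the
pair: `ξ 0 = {K₁}`, `ξ 1` has `2` or `4` elements, each `ξ (i+1)` refines `ξ i`, every
element of `ξ i` (`i ≥ 1`) not retained in `ξ (i+1)` splits into exactly three distinct
nonempty elements of `ξ (i+1)`, an element of `ξ i` (`i ≥ 1`) meets `K₀` iff it belongs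
to `ξ (i-1) ∪ ξ (i+1)`, and the sequence separates points. -/
theorem stmt16 (K₁ : Type*) [TopologicalSpace K₁] [CompactSpace K₁]
    [TopologicalSpace.MetrizableSpace K₁] [TotallyDisconnectedSpace K₁] [Infinite K₁]
    (K₀ : Set K₁) (hK₀ : IsClosed K₀)
    (hiso : ∀ x : K₁, IsOpen ({x} : Set K₁) → x ∈ K₀) :
    ∃ ξ : ℕ → Set (Set K₁),
      (∀ i, IsFiniteClopenPartition (ξ i)) ∧
      ξ 0 = {Set.univ} ∧
      ((ξ 1).ncard = 2 ∨ (ξ 1).ncard = 4) ∧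
      (∀ i, PartRefines (ξ i) (ξ (i + 1))) ∧
      (∀ i, 1 ≤ i → ∀ A ∈ ξ i, A ∉ ξ (i + 1) →
        ∃ B₁ ∈ ξ (i + 1), ∃ B₂ ∈ ξ (i + 1), ∃ B₃ ∈ ξ (i + 1),
          B₁ ≠ B₂ ∧ B₁ ≠ B₃ ∧ B₂ ≠ B₃ ∧
          B₁.Nonempty ∧ B₂.Nonempty ∧ B₃.Nonempty ∧
          Disjoint B₁ B₂ ∧ Disjoint B₁ B₃ ∧ Disjoint B₂ B₃ ∧
          A = B₁ ∪ B₂ ∪ B₃) ∧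
      (∀ i, 1 ≤ i → ∀ A ∈ ξ i,
        ((A ∩ K₀).Nonempty ↔ A ∈ ξ (i - 1) ∪ ξ (i + 1))) ∧
      (∀ x y : K₁, x ≠ y → ∃ i, ∀ A ∈ ξ i, x ∈ A → y ∉ A) :=
  stmt16_general K₁ K₀ hiso
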